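/- Let x, h ∈ ℝ^n, let T₀ ⊆ {1,…,n}, let T̃₁,…,T̃_N ⊆ {1,…,n} be pairwise disjoint with union T̃, and let w₁,…,w_N ∈ [0,1]. If ‖x + h‖_{1,w} ≤ ‖x‖_{1,w}, then ‖h_{T₀ᶜ}‖₁ ≤ (Σ_{i=1}^N wᵢ − (N−1))‖h_{T₀}‖₁ + Σ_{i=1}^N (1−wᵢ)(‖h_{T̃ᵢᶜ∩T₀}‖₁ + ‖h_{T̃ᵢ∩T₀ᶜ}‖₁) + 2D. -/

import Mathlib

open Finset

/-- The restriction of a vector to a set of indices: agrees with `x` on `S`, zero elsewhere. -/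
noncomputable def restr {n : ℕ} (x : Fin n → ℝ) (S : Finset (Fin n)) : Fin n → ℝ :=
  fun i => if i ∈ S then x i else 0

/-- The ℓ1 norm of a vector in ℝ^n. -/
noncomputable def nrm1 {n : ℕ} (x : Fin n → ℝ) : ℝ := ∑ i, |x i|

/-- The ℓ2 (Euclidean) norm of a vector in ℝ^n. -/
noncomputable def nrm2 {n : ℕ} (x : Fin n → ℝ) : ℝ := Real.sqrt (∑ i, (x i) ^ 2)

/-- The weighted ℓ1 norm associated with support-estimate sets `T 1, …, T N`
(with weights `w 1, …, w N`), where weight `1` is used off `⋃ i, T i`. -/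
noncomputable def wl1 {n : ℕ} (N : ℕ) (T : ℕ → Finset (Fin n)) (w : ℕ → ℝ)
    (x : Fin n → ℝ) : ℝ :=
  ∑ i ∈ Finset.Icc 1 N, w i * nrm1 (restr x (T i)) +
    nrm1 (restr x ((Finset.Icc 1 N).biUnion T)ᶜ)

/-- `A` satisfies the restricted isometry bound with constant `δ` at sparsity level `k`. -/
def RIPBound {m n : ℕ} (A : Matrix (Fin m) (Fin n) ℝ) (δ : ℝ) (k : ℕ) : Prop :=
  ∀ v : Fin n → ℝ, (Finset.univ.filter fun i => v i ≠ 0).card ≤ k →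
    (1 - δ) * (nrm2 v) ^ 2 ≤ (nrm2 (A.mulVec v)) ^ 2 ∧
      (nrm2 (A.mulVec v)) ^ 2 ≤ (1 + δ) * (nrm2 v) ^ 2

/-- The constant `K_N` appearing in the multi-weight recovery guarantee. -/
noncomputable def KN (N : ℕ) (w ρ α : ℕ → ℝ) : ℝ :=
  w N + (1 - w 1) * Real.sqrt (1 + ∑ i ∈ Finset.Icc 1 N, (ρ i - 2 * α i * ρ i)) +
    ∑ j ∈ Finset.Icc 2 N, (w (j - 1) - w j) *
      Real.sqrt (1 + ∑ i ∈ Finset.Icc j N, (ρ i - 2 * α i * ρ i))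

/-- The quantity `D` appearing in the multi-weight error bounds. -/
noncomputable def DD {n : ℕ} (N : ℕ) (T : ℕ → Finset (Fin n)) (T₀ : Finset (Fin n))
    (w : ℕ → ℝ) (x : Fin n → ℝ) : ℝ :=
  (∑ i ∈ Finset.Icc 1 N, w i) * nrm1 (restr x T₀ᶜ) +
    (1 - ∑ i ∈ Finset.Icc 1 N, w i) *
      nrm1 (restr x (((Finset.Icc 1 N).biUnion T)ᶜ ∩ T₀ᶜ)) -
    ∑ i ∈ Finset.Icc 1 N, (∑ j ∈ (Finset.Icc 1 N).erase i, w j) *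
      nrm1 (restr x (T i ∩ T₀ᶜ))

/-- The set `S_j = (T₀ ∪ ⋃_{i=j}^N T̃ᵢ) \ ⋃_{i=j}^N (T̃ᵢ ∩ T₀)`. -/
def SS {n : ℕ} (N : ℕ) (T : ℕ → Finset (Fin n)) (T₀ : Finset (Fin n)) (j : ℕ) :
    Finset (Fin n) :=
  (T₀ ∪ (Finset.Icc j N).biUnion T) \ (Finset.Icc j N).biUnion (fun i => T i ∩ T₀)

/-!
For nonnegative weights `‖·‖_{1,w}` is a seminorm that splits additively along `T₀` and `T₀ᶜ`;
the reverse triangle inequality on each piece turns `‖x + h‖_{1,w} ≤ ‖x‖_{1,w}` into the weighted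
cone constraint `‖h_{T₀ᶜ}‖_{1,w} ≤ ‖h_{T₀}‖_{1,w} + 2‖x_{T₀ᶜ}‖_{1,w}`. Because the `T̃ᵢ` are
disjoint, `‖v‖₁ - ‖v‖_{1,w} = Σᵢ (1 - wᵢ)‖v_{T̃ᵢ}‖₁`; this identity gives `D = ‖x_{T₀ᶜ}‖_{1,w}`
and turns the right-hand side of the claim minus `2D` into
`‖h_{T₀}‖_{1,w} + ‖h_{T₀ᶜ}‖₁ - ‖h_{T₀ᶜ}‖_{1,w}`, so the claim is the cone constraint.
-/

open Finset

section Restriction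

variable {n : ℕ}

theorem restr_add (x y : Fin n → ℝ) (S : Finset (Fin n)) :
    restr (x + y) S = restr x S + restr y S := by
  ext i; simp only [restr, Pi.add_apply]; split_ifs <;> simp

theorem restr_neg (x : Fin n → ℝ) (S : Finset (Fin n)) : restr (-x) S = -restr x S := by
  ext i; simp only [restr, Pi.neg_apply]; split_ifs <;> simp

theorem restr_restr (x : Fin n → ℝ) (S P : Finset (Fin n)) :
    restr (restr x P) S = restr x (S ∩ P) := by
  ext i; simp only [restr, mem_inter]; split_ifs <;> tauto

theorem restr_comm (x : Fin n → ℝ) (S P : Finset (Fin n)) :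
    restr (restr x P) S = restr (restr x S) P := by
  rw [restr_restr, restr_restr, inter_comm]

theorem nrm1_restr (x : Fin n → ℝ) (S : Finset (Fin n)) :
    nrm1 (restr x S) = ∑ i ∈ S, |x i| := by
  simp [nrm1, restr, apply_ite, sum_ite_mem]

theorem nrm1_add_le (x y : Fin n → ℝ) : nrm1 (x + y) ≤ nrm1 x + nrm1 y := by
  rw [nrm1, nrm1, nrm1, ← sum_add_distrib]
  exact sum_le_sum fun i _ => abs_add_le _ _

theorem nrm1_neg (x : Fin n → ℝ) : nrm1 (-x) = nrm1 x := by
  simp [nrm1]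

theorem nrm1_eq_restr_add_restr_compl (x : Fin n → ℝ) (P : Finset (Fin n)) :
    nrm1 x = nrm1 (restr x P) + nrm1 (restr x Pᶜ) := by
  rw [nrm1_restr, nrm1_restr, sum_add_sum_compl]
  rfl

theorem nrm1_eq_sum_restr_add_restr_compl {ι : Type*} [DecidableEq ι] (I : Finset ι)
    (T : ι → Finset (Fin n)) (hT : (I : Set ι).PairwiseDisjoint T) (x : Fin n → ℝ) :
    nrm1 x = ∑ i ∈ I, nrm1 (restr x (T i)) + nrm1 (restr x (I.biUnion T)ᶜ) := by
  simp only [nrm1_restr]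
  rw [← sum_biUnion hT, sum_add_sum_compl]
  rfl

end Restriction

section WeightedNorm

variable {n N : ℕ} {T : ℕ → Finset (Fin n)} {w : ℕ → ℝ}

theorem wl1_neg (x : Fin n → ℝ) : wl1 N T w (-x) = wl1 N T w x := by
  simp only [wl1, restr_neg, nrm1_neg]

theorem wl1_add_le (hw : ∀ i ∈ Icc 1 N, 0 ≤ w i) (x y : Fin n → ℝ) :
    wl1 N T w (x + y) ≤ wl1 N T w x + wl1 N T w y := by
  have hTi : ∀ i ∈ Icc 1 N, w i * nrm1 (restr (x + y) (T i)) ≤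
      w i * nrm1 (restr x (T i)) + w i * nrm1 (restr y (T i)) := fun i hi => by
    rw [← mul_add, restr_add]
    exact mul_le_mul_of_nonneg_left (nrm1_add_le _ _) (hw i hi)
  have hU := nrm1_add_le (restr x ((Icc 1 N).biUnion T)ᶜ) (restr y ((Icc 1 N).biUnion T)ᶜ)
  have hsum := sum_le_sum hTi
  rw [sum_add_distrib] at hsum
  rw [wl1, wl1, wl1, restr_add]
  linarith

theorem wl1_sub_le_wl1_add (hw : ∀ i ∈ Icc 1 N, 0 ≤ w i) (x y : Fin n → ℝ) :
    wl1 N T w x - wl1 N T w y ≤ wl1 N T w (x + y) := by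
  have h := wl1_add_le (T := T) hw (x + y) (-y)
  rw [add_neg_cancel_right, wl1_neg] at h
  linarith

theorem wl1_eq_restr_add_restr_compl (x : Fin n → ℝ) (P : Finset (Fin n)) :
    wl1 N T w x = wl1 N T w (restr x P) + wl1 N T w (restr x Pᶜ) := by
  have hsplit : ∀ S, nrm1 (restr x S) =
      nrm1 (restr (restr x P) S) + nrm1 (restr (restr x Pᶜ) S) := fun S => by
    rw [restr_comm x S P, restr_comm x S Pᶜ]
    exact nrm1_eq_restr_add_restr_compl _ P
  simp only [wl1, hsplit, mul_add, sum_add_distrib]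
  ring

theorem wl1_restr_compl_le (hw : ∀ i ∈ Icc 1 N, 0 ≤ w i) {x h : Fin n → ℝ}
    (hmin : wl1 N T w (x + h) ≤ wl1 N T w x) (P : Finset (Fin n)) :
    wl1 N T w (restr h Pᶜ) ≤ wl1 N T w (restr h P) + 2 * wl1 N T w (restr x Pᶜ) := by
  have hxh := wl1_eq_restr_add_restr_compl (N := N) (T := T) (w := w) (x + h) P
  have hx := wl1_eq_restr_add_restr_compl (N := N) (T := T) (w := w) x P
  rw [restr_add, restr_add] at hxh
  have hP := wl1_sub_le_wl1_add (T := T) hw (restr x P) (restr h P)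
  have hPc := wl1_sub_le_wl1_add (T := T) hw (restr h Pᶜ) (restr x Pᶜ)
  rw [add_comm] at hPc
  linarith

theorem nrm1_sub_wl1 (hT : ((Icc 1 N : Finset ℕ) : Set ℕ).PairwiseDisjoint T) (v : Fin n → ℝ) :
    nrm1 v - wl1 N T w v = ∑ i ∈ Icc 1 N, (1 - w i) * nrm1 (restr v (T i)) := by
  rw [nrm1_eq_sum_restr_add_restr_compl (Icc 1 N) T hT v]
  simp only [wl1, sub_mul, one_mul, sum_sub_distrib]
  ring

theorem DD_eq_wl1_restr_compl (hT : ((Icc 1 N : Finset ℕ) : Set ℕ).PairwiseDisjoint T)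
    (T₀ : Finset (Fin n)) (x : Fin n → ℝ) :
    DD N T T₀ w x = wl1 N T w (restr x T₀ᶜ) := by
  have hsplit := nrm1_eq_sum_restr_add_restr_compl (Icc 1 N) T hT (restr x T₀ᶜ)
  have hcross : ∀ i ∈ Icc 1 N,
      (∑ j ∈ (Icc 1 N).erase i, w j) * nrm1 (restr (restr x T₀ᶜ) (T i)) =
        (∑ j ∈ Icc 1 N, w j) * nrm1 (restr (restr x T₀ᶜ) (T i)) -
          w i * nrm1 (restr (restr x T₀ᶜ) (T i)) := fun i hi => by
    rw [sum_erase_eq_sub hi, sub_mul]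
  simp only [DD, wl1, ← restr_restr x _ T₀ᶜ]
  rw [sum_congr rfl hcross, sum_sub_distrib, ← mul_sum, hsplit]
  ring

theorem cone_constraint_rhs_eq (hT : ((Icc 1 N : Finset ℕ) : Set ℕ).PairwiseDisjoint T)
    (T₀ : Finset (Fin n)) (h : Fin n → ℝ) :
    ((∑ i ∈ Icc 1 N, w i) - ((N : ℝ) - 1)) * nrm1 (restr h T₀) +
        ∑ i ∈ Icc 1 N,
          (1 - w i) * (nrm1 (restr h ((T i)ᶜ ∩ T₀)) + nrm1 (restr h (T i ∩ T₀ᶜ))) =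
      wl1 N T w (restr h T₀) + nrm1 (restr h T₀ᶜ) - wl1 N T w (restr h T₀ᶜ) := by
  have hcard : ∑ i ∈ Icc 1 N, (1 - w i) = N - ∑ i ∈ Icc 1 N, w i := by
    simp [sum_sub_distrib]
  have hsplit : ∀ i, nrm1 (restr (restr h T₀) (T i)ᶜ) =
      nrm1 (restr h T₀) - nrm1 (restr (restr h T₀) (T i)) := fun i => by
    rw [nrm1_eq_restr_add_restr_compl (restr h T₀) (T i)]
    ring
  have hin := nrm1_sub_wl1 (w := w) hT (restr h T₀)
  have hout := nrm1_sub_wl1 (w := w) hT (restr h T₀ᶜ)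
  simp only [← restr_restr h _ T₀, ← restr_restr h _ T₀ᶜ, hsplit, mul_add, mul_sub,
    sum_add_distrib, sum_sub_distrib, ← sum_mul, hcard]
  linarith

end WeightedNorm

/-- intermediate form of the cone constraint. -/
theorem cone_constraint_intermediate
    {n N : ℕ} (x h : Fin n → ℝ) (T₀ : Finset (Fin n)) (T : ℕ → Finset (Fin n))
    (hdisj : ∀ i ∈ Finset.Icc 1 N, ∀ j ∈ Finset.Icc 1 N, i ≠ j → Disjoint (T i) (T j))
    (w : ℕ → ℝ) (hw : ∀ i ∈ Finset.Icc 1 N, 0 ≤ w i ∧ w i ≤ 1)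
    (hmin : wl1 N T w (x + h) ≤ wl1 N T w x) :
    nrm1 (restr h T₀ᶜ) ≤
      ((∑ i ∈ Finset.Icc 1 N, w i) - ((N : ℝ) - 1)) * nrm1 (restr h T₀) +
        ∑ i ∈ Finset.Icc 1 N,
          (1 - w i) * (nrm1 (restr h ((T i)ᶜ ∩ T₀)) + nrm1 (restr h (T i ∩ T₀ᶜ))) +
        2 * DD N T T₀ w x := by
  have hT : ((Icc 1 N : Finset ℕ) : Set ℕ).PairwiseDisjoint T := fun i hi j hj hij =>
    hdisj i hi j hj hij
  have hcone := wl1_restr_compl_le (fun i hi => (hw i hi).1) hmin T₀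
  rw [cone_constraint_rhs_eq hT, DD_eq_wl1_restr_compl hT]
  linarith
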